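/- (Loop Lemma) Let 𝒱 be a finite type with distinguished distinct elements S and D. Let ξ : Finset (𝒱 ⊕ 𝒱) → ℝ be submodular and let h : 𝒱 → ℝ satisfy ξ(left-copy of A) = ∑_{v ∈ A} h(v) for every finite A ⊆ 𝒱; define ψ as below. Let V_1, …, V_l be pairwise distinct subsets of 𝒱 ∖ {S}, each containing D. Then ψ(V_1, V_2) + ψ(V_2, V_3) + ⋯ + ψ(V_{l−1}, V_l) + ψ(V_l, V_1) ≥ ∑_{i=1}^{l} ψ(Ṽ_i, Ṽ_i), where Ṽ_k is the derived family of (V_1, …, V_l). -/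

import Mathlib

/-!
Under `(A, B) ↦ A.disjSum B`, `ψ` becomes `g C = ξ C - ∑ v ∈ C.toLeft, h v`, which is submodular
on `Finset (𝒱 ⊕ 𝒱)` because the subtracted sum is modular. The derived set `Ṽ_k` is the set of
points lying in at least `k` of the `V_i`, so it only depends on these multiplicities: the derived
sets of the family `V_i ⊕ V_{i+1}` are `Ṽ_k ⊕ Ṽ_k`, the cyclic shift being harmless. It remains to
show `∑_k f(Ṽ_k) ≤ ∑_i f(V_i)` for any submodular `f` and any family, by induction on the family:
adding a set `x` to a family with derived sets `y_1 ⊇ y_2 ⊇ ⋯` turns them into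
`y_k ∪ (x ∩ y_{k-1})` (with `y_0 = x`), and uncrossing `y_k` with `x ∩ y_{k-1}` for
`k = 1, 2, …` in turn shows that the sum of `f` does not increase.
-/

/-- For a family of finite sets `V 0, …, V (l-1)` of `α`, the derived set
`Ṽ_k = ⋃_{ {i₁,…,i_k} ⊆ {1,…,l} } V_{i₁} ∩ ⋯ ∩ V_{i_k}`, the union ranging over all
`k`-element index subsets. -/
def tildeSet {α : Type*} [DecidableEq α] {l : ℕ} (V : Fin l → Finset α) (k : ℕ) : Finset α :=
  ((Finset.univ : Finset (Fin l)).powersetCard k).sup fun s =>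
    if h : s.Nonempty then s.inf' h V else ∅

open Finset

section Submodular

variable {α : Type*} [DecidableEq α]

def IsSubmodular (f : Finset α → ℝ) : Prop :=
  ∀ A B, f (A ∪ B) + f (A ∩ B) ≤ f A + f B

theorem IsSubmodular.sub_sum_toLeft {β : Type*} [DecidableEq β] {f : Finset (α ⊕ β) → ℝ}
    (hf : IsSubmodular f) (h : α → ℝ) :
    IsSubmodular fun C => f C - ∑ v ∈ C.toLeft, h v := by
  intro A B
  have hmod := sum_union_inter (s₁ := A.toLeft) (s₂ := B.toLeft) (f := h)
  simp only [toLeft_union, toLeft_inter]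
  linarith [hf A B]

theorem IsSubmodular.sum_range_union_add_le {f : Finset α → ℝ} (hf : IsSubmodular f)
    (y z : ℕ → Finset α) (hyz : ∀ k, y k ∩ z k = z (k + 1)) (n : ℕ) :
    ∑ k ∈ range n, f (y k ∪ z k) + f (z n) ≤ ∑ k ∈ range n, f (y k) + f (z 0) := by
  induction n with
  | zero => simp
  | succ n ih =>
    rw [sum_range_succ, sum_range_succ, ← hyz]
    linarith [hf (y n) (z n)]

end Submodular

section CoverLevel

variable {ι α : Type*} [DecidableEq α] (W : ι → Finset α)

def coverCount (s : Finset ι) (v : α) : ℕ := #{i ∈ s | v ∈ W i}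

-- Cut down to `s.biUnion W` to stay finite without `Fintype α`; this changes only level `0`.
def coverLevel (s : Finset ι) (k : ℕ) : Finset α := {v ∈ s.biUnion W | k ≤ coverCount W s v}

variable {W}

theorem coverCount_insert [DecidableEq ι] {a : ι} {s : Finset ι} (ha : a ∉ s) (v : α) :
    coverCount W (insert a s) v = coverCount W s v + if v ∈ W a then 1 else 0 := by
  unfold coverCount
  rw [filter_insert]
  split_ifs
  · exact card_insert_of_notMem (fun h => ha (mem_filter.mp h).1)
  · rfl

theorem mem_coverLevel_succ {s : Finset ι} {k : ℕ} {v : α} :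
    v ∈ coverLevel W s (k + 1) ↔ k + 1 ≤ coverCount W s v := by
  refine ⟨fun hv => (mem_filter.mp hv).2, fun hv => mem_filter.mpr ⟨?_, hv⟩⟩
  obtain ⟨i, hi⟩ := card_pos.mp (show 0 < coverCount W s v by omega)
  exact mem_biUnion.mpr ⟨i, (mem_filter.mp hi).1, (mem_filter.mp hi).2⟩

theorem coverLevel_card_succ (s : Finset ι) : coverLevel W s (#s + 1) = ∅ := by
  ext v
  simpa [mem_coverLevel_succ, coverCount] using card_filter_le s (v ∈ W ·)

theorem coverLevel_insert_succ [DecidableEq ι] {a : ι} {s : Finset ι} (ha : a ∉ s) (k : ℕ) :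
    coverLevel W (insert a s) (k + 1)
      = coverLevel W s (k + 1) ∪ {v ∈ W a | k ≤ coverCount W s v} := by
  ext v
  simp only [mem_union, mem_filter, mem_coverLevel_succ, coverCount_insert ha]
  split_ifs <;> grind

theorem coverLevel_succ_inter_filter (s : Finset ι) (x : Finset α) (k : ℕ) :
    coverLevel W s (k + 1) ∩ {v ∈ x | k ≤ coverCount W s v}
      = {v ∈ x | k + 1 ≤ coverCount W s v} := by
  ext v
  simp only [mem_inter, mem_filter, mem_coverLevel_succ]
  exact ⟨fun ⟨hk, hv, _⟩ => ⟨hv, hk⟩, fun ⟨hv, hk⟩ => ⟨hk, hv, by omega⟩⟩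

theorem IsSubmodular.sum_coverLevel_le {f : Finset α → ℝ} (hf : IsSubmodular f)
    [DecidableEq ι] (W : ι → Finset α) (s : Finset ι) :
    ∑ k ∈ range #s, f (coverLevel W s (k + 1)) ≤ ∑ i ∈ s, f (W i) := by
  induction s using Finset.induction_on with
  | empty => simp
  | insert a s ha ih =>
    have hbubble := hf.sum_range_union_add_le (fun k => coverLevel W s (k + 1))
      (fun k => {v ∈ W a | k ≤ coverCount W s v}) (coverLevel_succ_inter_filter s (W a)) #s
    have hz₀ : {v ∈ W a | 0 ≤ coverCount W s v} = W a :=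
      filter_true_of_mem fun _ _ => Nat.zero_le _
    have hlast : coverLevel W (insert a s) (#s + 1) = {v ∈ W a | #s ≤ coverCount W s v} := by
      rw [coverLevel_insert_succ ha, coverLevel_card_succ, empty_union]
    rw [hz₀] at hbubble
    rw [card_insert_of_notMem ha, sum_range_succ, hlast, sum_insert ha]
    simp only [coverLevel_insert_succ ha]
    linarith

end CoverLevel

section TildeSet

variable {α : Type*} [DecidableEq α] {l : ℕ}

theorem mem_tildeSet {V : Fin l → Finset α} {k : ℕ} {v : α} :
    v ∈ tildeSet V k ↔ 1 ≤ k ∧ k ≤ coverCount V univ v := by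
  simp only [tildeSet, mem_sup, mem_powersetCard_univ, coverCount]
  constructor
  · rintro ⟨s, rfl, hv⟩
    split_ifs at hv with hs
    · have hsub : s ⊆ {i ∈ (univ : Finset (Fin l)) | v ∈ V i} := fun i hi =>
        mem_filter.mpr ⟨mem_univ i, (mem_inf' hs).mp hv i hi⟩
      exact ⟨hs.card_pos, card_le_card hsub⟩
    · exact absurd hv (notMem_empty v)
  · rintro ⟨hk, hkv⟩
    obtain ⟨s, hsub, rfl⟩ := exists_subset_card_eq hkv
    have hs : s.Nonempty := card_pos.mp hk
    refine ⟨s, rfl, ?_⟩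
    rw [dif_pos hs, mem_inf' hs]
    exact fun i hi => (mem_filter.mp (hsub hi)).2

theorem tildeSet_eq_coverLevel (V : Fin l → Finset α) (k : ℕ) :
    tildeSet V (k + 1) = coverLevel V univ (k + 1) := by
  ext v
  rw [mem_tildeSet, mem_coverLevel_succ]
  omega

theorem tildeSet_comp_equiv {m : ℕ} (V : Fin l → Finset α) (e : Fin m ≃ Fin l) :
    tildeSet (fun i => V (e i)) = tildeSet V := by
  funext k
  ext v
  simp only [mem_tildeSet, coverCount]
  rw [card_equiv e (t := {i ∈ univ | v ∈ V i}) (by simp)]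

theorem tildeSet_disjSum {β : Type*} [DecidableEq β] (V : Fin l → Finset α)
    (W : Fin l → Finset β) (k : ℕ) :
    tildeSet (fun i => (V i).disjSum (W i)) k = (tildeSet V k).disjSum (tildeSet W k) := by
  ext (v | v) <;> simp [mem_tildeSet, coverCount]

theorem IsSubmodular.sum_tildeSet_le {f : Finset α → ℝ} (hf : IsSubmodular f)
    (V : Fin l → Finset α) :
    ∑ k ∈ Icc 1 l, f (tildeSet V k) ≤ ∑ i, f (V i) := by
  have hreindex : ∑ k ∈ Icc 1 l, f (tildeSet V k) = ∑ k ∈ range l, f (tildeSet V (k + 1)) := by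
    rw [range_eq_Ico, sum_Ico_add' (fun k => f (tildeSet V k)), Ico_add_one_right_eq_Icc]
  simpa [hreindex, tildeSet_eq_coverLevel] using hf.sum_coverLevel_le V univ

end TildeSet

theorem loop_lemma_general {𝒱 : Type*} [DecidableEq 𝒱]
    (ξ : Finset (𝒱 ⊕ 𝒱) → ℝ)
    (hsub : ∀ A B : Finset (𝒱 ⊕ 𝒱), ξ (A ∪ B) + ξ (A ∩ B) ≤ ξ A + ξ B)
    (h : 𝒱 → ℝ)
    (ψ : Finset 𝒱 → Finset 𝒱 → ℝ)
    (hψ : ∀ A B : Finset 𝒱,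
      ψ A B = ξ (B.image Sum.inr ∪ A.image Sum.inl) - ∑ v ∈ A, h v)
    {l : ℕ} [NeZero l] (V : Fin l → Finset 𝒱) :
    ∑ k ∈ Finset.Icc 1 l, ψ (tildeSet V k) (tildeSet V k)
      ≤ ∑ i : Fin l, ψ (V i) (V (i + 1)) := by
  set g : Finset (𝒱 ⊕ 𝒱) → ℝ := fun C => ξ C - ∑ v ∈ C.toLeft, h v
  have hψg : ∀ A B, ψ A B = g (A.disjSum B) := by
    intro A B
    have hpair : B.image Sum.inr ∪ A.image Sum.inl = A.disjSum B := by
      ext (v | v) <;> simp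
    simp only [hψ, g, hpair, toLeft_disjSum]
  have hshift : tildeSet (fun i => V (i + 1)) = tildeSet V :=
    tildeSet_comp_equiv V (Equiv.addRight 1)
  calc ∑ k ∈ Icc 1 l, ψ (tildeSet V k) (tildeSet V k)
      = ∑ k ∈ Icc 1 l, g (tildeSet (fun i => (V i).disjSum (V (i + 1))) k) := by
        simp only [hψg, tildeSet_disjSum, hshift]
    _ ≤ ∑ i, g ((V i).disjSum (V (i + 1))) :=
        IsSubmodular.sum_tildeSet_le (IsSubmodular.sub_sum_toLeft hsub h) _
    _ = ∑ i, ψ (V i) (V (i + 1)) := by simp only [hψg]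

/-- **Loop Lemma.** With `ξ` submodular (playing the role of entropy), `h` additive on left
copies (independent inputs), and `ψ A B = ξ(Y_B ∪ X_A) − ∑_{v ∈ A} h v` (the analogue of
`H(Y_B | X_A)`), for pairwise distinct subsets `V_1, …, V_l` of `𝒱 ∖ {S}` each containing `D`,
`ψ(V_1,V_2) + ⋯ + ψ(V_{l-1},V_l) + ψ(V_l,V_1) ≥ ∑_{i=1}^{l} ψ(Ṽ_i, Ṽ_i)`. -/
theorem loop_lemma {𝒱 : Type*} [Fintype 𝒱] [DecidableEq 𝒱]
    (S D : 𝒱) (hSD : S ≠ D)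
    (ξ : Finset (𝒱 ⊕ 𝒱) → ℝ)
    (hsub : ∀ A B : Finset (𝒱 ⊕ 𝒱), ξ (A ∪ B) + ξ (A ∩ B) ≤ ξ A + ξ B)
    (h : 𝒱 → ℝ)
    (hξh : ∀ A : Finset 𝒱, ξ (A.image Sum.inl) = ∑ v ∈ A, h v)
    (ψ : Finset 𝒱 → Finset 𝒱 → ℝ)
    (hψ : ∀ A B : Finset 𝒱,
      ψ A B = ξ (B.image Sum.inr ∪ A.image Sum.inl) - ∑ v ∈ A, h v)
    {l : ℕ} [NeZero l] (V : Fin l → Finset 𝒱)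
    (hdist : Function.Injective V)
    (hD : ∀ i, D ∈ V i) (hS : ∀ i, S ∉ V i) :
    ∑ k ∈ Finset.Icc 1 l, ψ (tildeSet V k) (tildeSet V k)
      ≤ ∑ i : Fin l, ψ (V i) (V (i + 1)) :=
  loop_lemma_general ξ hsub h ψ hψ V
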